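/- Let r_n := (2/π) ∫_0^{π/2} sin(nx)² / (sin x · √(4 − cos(x)²)) dx. Then there exists a constant K > 0 such that for every integer n ≥ 1, |r_n − log(n)/(√3·π) − (γ + log(2√3))/(√3·π)| ≤ K/n, where γ is the Euler–Mascheroni constant. In particular r_n − log(n)/(√3·π) converges to (γ + log(2√3))/(√3·π) as n → ∞. -/

import Mathlib

open Real Filter

/-!
With `s x = √(4 - cos² x)`, the kernel splits as `1 / (sin x · s x) = 1 / (√3 sin x) + ψ x`,
where `ψ x = -sin x / (√3 · s x · (√3 + s x))` is smooth.
Since `sin² (n x) / sin x = ∑_{k<n} sin ((2k+1) x)`, the singular part contributes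
`(2 / (√3 π)) ∑_{k<n} 1 / (2k+1) = (2 / (√3 π)) (H_{2n} - H_n / 2)`, which is
`(log n + log 4 + γ) / (√3 π) + O(1/n)`. In the regular part
`sin² (n x) = (1 - cos (2 n x)) / 2`: the oscillating term is `O(1/n)` after one integration
by parts, and `∫₀^{π/2} ψ` is read off an explicit primitive.
-/

/-- The two-point resistance `R(n,n)` of the infinite triangular resistor lattice. -/
noncomputable def triRes (n : ℕ) : ℝ :=
  (2 / π) * ∫ x in (0:ℝ)..(π / 2),
    Real.sin (n * x) ^ 2 / (Real.sin x * Real.sqrt (4 - Real.cos x ^ 2))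

open Set intervalIntegral

theorem sin_sq_sub_sin_sq_eq (a b : ℝ) :
    sin a ^ 2 - sin b ^ 2 = sin (a + b) * sin (a - b) := by
  rw [sin_add, sin_sub]
  linear_combination sin b ^ 2 * sin_sq_add_cos_sq a - sin a ^ 2 * sin_sq_add_cos_sq b

theorem sin_mul_sum_sin_odd_mul (n : ℕ) (x : ℝ) :
    sin x * ∑ k ∈ Finset.range n, sin ((2 * k + 1) * x) = sin (n * x) ^ 2 := by
  induction n with
  | zero => simp
  | succ n ih =>
    rw [Finset.sum_range_succ, mul_add, ih, eq_comm, ← sub_eq_iff_eq_add', sin_sq_sub_sin_sq_eq]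
    push_cast
    ring_nf

theorem sin_sq_div_sin_eq_sum_sin_odd_mul (n : ℕ) (x : ℝ) :
    sin (n * x) ^ 2 / sin x = ∑ k ∈ Finset.range n, sin ((2 * k + 1) * x) := by
  rcases eq_or_ne (sin x) 0 with hx | hx
  -- `_ / 0 = 0` on the left; on the right every `sin ((2k+1) m π)` vanishes.
  · obtain ⟨m, rfl⟩ := sin_eq_zero_iff.mp hx
    rw [hx, div_zero, eq_comm]
    refine Finset.sum_eq_zero fun k _ => ?_
    rw [← mul_assoc]
    exact_mod_cast sin_int_mul_pi ((2 * k + 1) * m)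
  · rw [div_eq_iff hx, ← sin_mul_sum_sin_odd_mul, mul_comm]

theorem integral_sin_odd_mul (k : ℕ) :
    ∫ x in (0 : ℝ)..π / 2, sin ((2 * k + 1) * x) = 1 / (2 * k + 1) := by
  have hk : (2 * k + 1 : ℝ) ≠ 0 := by positivity
  have hcos : cos ((2 * k + 1) * (π / 2)) = 0 := by
    rw [show (2 * k + 1) * (π / 2) = k * π + π / 2 by ring, cos_add_pi_div_two, sin_nat_mul_pi,
      neg_zero]
  rw [integral_comp_mul_left (fun x => sin x) hk, integral_sin, mul_zero, cos_zero, hcos]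
  simp

theorem integral_sin_sq_div_sin (n : ℕ) :
    ∫ x in (0 : ℝ)..π / 2, sin (n * x) ^ 2 / sin x
      = ∑ k ∈ Finset.range n, 1 / (2 * k + 1 : ℝ) := by
  simp_rw [sin_sq_div_sin_eq_sum_sin_odd_mul]
  rw [integral_finsetSum fun k _ => (by fun_prop : Continuous _).intervalIntegrable _ _]
  exact Finset.sum_congr rfl fun k _ => integral_sin_odd_mul k

theorem sum_range_inv_two_mul_add_one (n : ℕ) :
    ∑ k ∈ Finset.range n, 1 / (2 * k + 1 : ℝ) = harmonic (2 * n) - harmonic n / 2 := by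
  induction n with
  | zero => simp
  | succ n ih =>
    rw [Finset.sum_range_succ, ih, show 2 * (n + 1) = 2 * n + 1 + 1 by ring, harmonic_succ,
      harmonic_succ, harmonic_succ]
    push_cast
    field_simp
    ring

theorem harmonic_sub_log_sub_eulerMascheroniConstant_nonneg {n : ℕ} (hn : n ≠ 0) :
    0 ≤ harmonic n - log n - eulerMascheroniConstant := by
  have h := eulerMascheroniConstant_lt_eulerMascheroniSeq' n
  rw [eulerMascheroniSeq', if_neg hn] at h
  linarith

theorem harmonic_sub_log_sub_eulerMascheroniConstant_le (n : ℕ) :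
    harmonic n - log n - eulerMascheroniConstant ≤ 1 / n := by
  have h := eulerMascheroniSeq_lt_eulerMascheroniConstant n
  rcases n.eq_zero_or_pos with rfl | hn
  · simpa [eulerMascheroniSeq_zero] using h.le
  have hlog : log (n + 1) - log n ≤ 1 / n := by
    rw [← log_div (by positivity) (by positivity)]
    refine (log_le_sub_one_of_pos (by positivity)).trans_eq ?_
    field_simp
    ring
  rw [eulerMascheroniSeq] at h
  linarith

theorem abs_sum_range_inv_two_mul_add_one_sub_le {n : ℕ} (hn : n ≠ 0) :
    |∑ k ∈ Finset.range n, 1 / (2 * k + 1 : ℝ)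
        - (log n + log 4 + eulerMascheroniConstant) / 2| ≤ 1 / (2 * n) := by
  have h2n := harmonic_sub_log_sub_eulerMascheroniConstant_nonneg (mul_ne_zero two_ne_zero hn)
  have h2n' := harmonic_sub_log_sub_eulerMascheroniConstant_le (2 * n)
  have hn' := harmonic_sub_log_sub_eulerMascheroniConstant_nonneg hn
  have hn'' := harmonic_sub_log_sub_eulerMascheroniConstant_le n
  have hlog : log (2 * n : ℕ) = log 4 / 2 + log n := by
    rw [show (4 : ℝ) = 2 ^ 2 by norm_num, log_pow, Nat.cast_mul, Nat.cast_ofNat,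
      log_mul two_ne_zero (by exact_mod_cast hn)]
    ring
  have hinv : (1 : ℝ) / (2 * n : ℕ) = 1 / n / 2 := by push_cast; ring
  rw [sum_range_inv_two_mul_add_one, abs_le]
  rw [hlog] at h2n h2n'
  rw [hinv] at h2n'
  constructor <;> linarith [show (1 : ℝ) / (2 * n) = 1 / n / 2 by ring]

theorem abs_integral_mul_cos_mul_le {f f' : ℝ → ℝ} {a b : ℝ} (hab : a ≤ b)
    (hf : ∀ x ∈ uIcc a b, HasDerivAt f (f' x) x)
    (hf' : IntervalIntegrable f' MeasureTheory.volume a b) {m : ℝ} (hm : 0 < m) :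
    |∫ x in a..b, f x * cos (m * x)| ≤ (|f a| + |f b| + ∫ x in a..b, |f' x|) / m := by
  have hsin : ∀ x ∈ uIcc a b, HasDerivAt (fun y => sin (m * y) / m) (cos (m * x)) x := by
    intro x _
    exact ((hasDerivAt_const_mul m).sin.div_const m).congr_deriv (by field_simp)
  rw [integral_mul_deriv_eq_deriv_mul hf hsin hf'
    ((by fun_prop : Continuous fun x => cos (m * x)).intervalIntegrable _ _)]
  have hterm : ∀ c y, |c * (sin (m * y) / m)| ≤ |c| / m := fun c y => by
    rw [abs_mul, abs_div, abs_of_pos hm, mul_div_assoc']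
    gcongr
    exact mul_le_of_le_one_right (abs_nonneg c) (abs_sin_le_one _)
  have hrest : |∫ x in a..b, f' x * (sin (m * x) / m)| ≤ (∫ x in a..b, |f' x|) / m := by
    rw [← intervalIntegral.integral_div, ← Real.norm_eq_abs]
    exact norm_integral_le_of_norm_le hab (Eventually.of_forall fun x _ => hterm (f' x) x)
      (hf'.abs.div_const m)
  calc _ ≤ |f b * (sin (m * b) / m)| + |f a * (sin (m * a) / m)|
          + |∫ x in a..b, f' x * (sin (m * x) / m)| :=
        (abs_sub _ _).trans (add_le_add_left (abs_sub _ _) _)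
    _ ≤ |f b| / m + |f a| / m + (∫ x in a..b, |f' x|) / m := by gcongr <;> apply hterm
    _ = _ := by ring

theorem ContDiff.exists_abs_integral_mul_cos_mul_le {f : ℝ → ℝ} (hf : ContDiff ℝ 1 f)
    {a b : ℝ} (hab : a ≤ b) :
    ∃ C, 0 ≤ C ∧ ∀ m, 0 < m → |∫ x in a..b, f x * Real.cos (m * x)| ≤ C / m := by
  have := integral_nonneg (μ := MeasureTheory.volume) hab fun x _ => abs_nonneg (deriv f x)
  exact ⟨_, by positivity, fun _ hm => abs_integral_mul_cos_mul_le hab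
    (fun x _ => (hf.differentiable one_ne_zero x).hasDerivAt)
    ((hf.continuous_deriv le_rfl).intervalIntegrable _ _) hm⟩

noncomputable def sqrtFourSubCosSq (x : ℝ) : ℝ := √(4 - cos x ^ 2)

noncomputable def triResRegularPart (x : ℝ) : ℝ :=
  -sin x / (√3 * sqrtFourSubCosSq x * (√3 + sqrtFourSubCosSq x))

noncomputable def triResRegularPartPrimitive (x : ℝ) : ℝ :=
  -(√3)⁻¹ * (log (sqrtFourSubCosSq x + √3 * cos x) - log (2 * (1 + cos x)))

theorem four_sub_cos_sq_pos (x : ℝ) : 0 < 4 - cos x ^ 2 := by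
  nlinarith [cos_sq_le_one x]

theorem sqrtFourSubCosSq_pos (x : ℝ) : 0 < sqrtFourSubCosSq x :=
  sqrt_pos.2 (four_sub_cos_sq_pos x)

theorem sqrtFourSubCosSq_sq (x : ℝ) : sqrtFourSubCosSq x ^ 2 = 4 - cos x ^ 2 :=
  sq_sqrt (four_sub_cos_sq_pos x).le

theorem hasDerivAt_sqrtFourSubCosSq (x : ℝ) :
    HasDerivAt sqrtFourSubCosSq (cos x * sin x / sqrtFourSubCosSq x) x := by
  have h := ((hasDerivAt_cos x).pow 2).const_sub 4 |>.sqrt (four_sub_cos_sq_pos x).ne'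
  exact h.congr_deriv (by simp only [Pi.pow_apply, sqrtFourSubCosSq]; field_simp; ring)

theorem contDiff_sqrtFourSubCosSq : ContDiff ℝ 1 sqrtFourSubCosSq :=
  contDiff_iff_contDiffAt.2 fun x =>
    (contDiff_const.sub (contDiff_cos.pow 2)).contDiffAt.sqrt (four_sub_cos_sq_pos x).ne'

theorem contDiff_triResRegularPart : ContDiff ℝ 1 triResRegularPart := by
  have := contDiff_sqrtFourSubCosSq
  refine contDiff_sin.neg.div (by fun_prop) fun x => ?_
  have := sqrtFourSubCosSq_pos x
  positivity

theorem inv_sin_mul_sqrtFourSubCosSq (x : ℝ) :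
    (sin x * sqrtFourSubCosSq x)⁻¹ = (√3 * sin x)⁻¹ + triResRegularPart x := by
  rcases eq_or_ne (sin x) 0 with hx | hx
  · simp [triResRegularPart, hx]
  have hs := sqrtFourSubCosSq_pos x
  have h3 : √3 ^ 2 = 3 := sq_sqrt (by norm_num)
  rw [triResRegularPart]
  field_simp
  linear_combination h3 + sin_sq x - sqrtFourSubCosSq_sq x

theorem hasDerivAt_triResRegularPartPrimitive {x : ℝ} (hx : -1 < cos x) :
    HasDerivAt triResRegularPartPrimitive (triResRegularPart x) x := by
  have hs := sqrtFourSubCosSq_pos x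
  have hs2 := sqrtFourSubCosSq_sq x
  have h3 : √3 ^ 2 = 3 := sq_sqrt (by norm_num)
  have h3pos : 0 < √3 := by positivity
  have hcos1 : 0 < 1 + cos x := by linarith
  -- `s² - 3 cos² = 4 (1 - cos²) > 0` with `s > 0`, so `s > -√3 cos`.
  have hnum : 0 < sqrtFourSubCosSq x + √3 * cos x := by
    nlinarith [cos_le_one x, mul_pos h3pos hs]
  have h := (((hasDerivAt_sqrtFourSubCosSq x).add ((hasDerivAt_cos x).const_mul √3)).log
    hnum.ne').sub ((((hasDerivAt_cos x).const_add 1).const_mul 2).log (by positivity))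
    |>.const_mul (-(√3)⁻¹)
  refine h.congr_deriv ?_
  rw [triResRegularPart, Pi.add_apply]
  field_simp
  linear_combination sin x * sqrtFourSubCosSq x * (h3 - hs2)

theorem integral_triResRegularPart :
    ∫ x in (0 : ℝ)..π / 2, triResRegularPart x = (√3)⁻¹ * (log (2 * √3) - log 4) := by
  have hderiv : ∀ x ∈ uIcc 0 (π / 2),
      HasDerivAt triResRegularPartPrimitive (triResRegularPart x) x := fun x hx => by
      rw [uIcc_of_le pi_div_two_pos.le] at hx
      refine hasDerivAt_triResRegularPartPrimitive ?_
      linarith [cos_nonneg_of_mem_Icc ⟨by linarith [pi_pos, hx.1], hx.2⟩]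
  rw [integral_eq_sub_of_hasDerivAt hderiv
    (contDiff_triResRegularPart.continuous.intervalIntegrable _ _)]
  simp only [triResRegularPartPrimitive, sqrtFourSubCosSq, cos_pi_div_two, cos_zero]
  norm_num
  ring_nf

theorem integral_sin_sq_mul {f : ℝ → ℝ} (hf : Continuous f) (a b c : ℝ) :
    ∫ x in a..b, sin (c * x) ^ 2 * f x
      = ((∫ x in a..b, f x) - ∫ x in a..b, f x * cos (2 * c * x)) / 2 := by
  have hsq : ∀ x, sin (c * x) ^ 2 * f x = (f x - f x * cos (2 * c * x)) / 2 := fun x => by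
    rw [sin_sq_eq_half_sub, ← mul_assoc]
    ring
  simp_rw [hsq]
  rw [intervalIntegral.integral_div, integral_sub (hf.intervalIntegrable _ _)
    ((by fun_prop : Continuous fun x => f x * cos (2 * c * x)).intervalIntegrable _ _)]

theorem continuous_sin_sq_div_sin (n : ℕ) : Continuous fun x => sin (n * x) ^ 2 / sin x := by
  simp_rw [sin_sq_div_sin_eq_sum_sin_odd_mul]
  fun_prop

theorem continuous_sin_sq_mul_triResRegularPart (n : ℕ) :
    Continuous fun x => sin (n * x) ^ 2 * triResRegularPart x := by
  have := contDiff_triResRegularPart.continuous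
  fun_prop

theorem triRes_eq (n : ℕ) :
    triRes n = 2 / π * ((√3)⁻¹ * ∑ k ∈ Finset.range n, 1 / (2 * k + 1 : ℝ)
      + ((√3)⁻¹ * (log (2 * √3) - log 4)
        - ∫ x in (0 : ℝ)..π / 2, triResRegularPart x * cos (2 * n * x)) / 2) := by
  have hsplit : ∀ x, sin (n * x) ^ 2 / (sin x * √(4 - cos x ^ 2))
      = (√3)⁻¹ * (sin (n * x) ^ 2 / sin x) + sin (n * x) ^ 2 * triResRegularPart x :=
    fun x => by
    rw [div_eq_mul_inv, ← sqrtFourSubCosSq, inv_sin_mul_sqrtFourSubCosSq]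
    ring
  rw [triRes]
  simp_rw [hsplit]
  rw [integral_add (((continuous_sin_sq_div_sin n).const_mul _).intervalIntegrable _ _)
      ((continuous_sin_sq_mul_triResRegularPart n).intervalIntegrable _ _),
    intervalIntegral.integral_const_mul, integral_sin_sq_div_sin,
    integral_sin_sq_mul contDiff_triResRegularPart.continuous, integral_triResRegularPart]

theorem triRes_sub_log_sub_eq (n : ℕ) :
    triRes n - log n / (√3 * π) - (eulerMascheroniConstant + log (2 * √3)) / (√3 * π)
      = 2 / (√3 * π) * (∑ k ∈ Finset.range n, 1 / (2 * k + 1 : ℝ)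
          - (log n + log 4 + eulerMascheroniConstant) / 2)
        - (∫ x in (0 : ℝ)..π / 2, triResRegularPart x * cos (2 * n * x)) / π := by
  rw [triRes_eq]
  field_simp
  ring

theorem triRes_asymptotics :
    (∃ K : ℝ, 0 < K ∧ ∀ n : ℕ, 1 ≤ n →
      |triRes n - Real.log n / (Real.sqrt 3 * π)
        - (Real.eulerMascheroniConstant + Real.log (2 * Real.sqrt 3)) / (Real.sqrt 3 * π)|
        ≤ K / n) ∧
    Tendsto (fun n : ℕ => triRes n - Real.log n / (Real.sqrt 3 * π)) atTop
      (nhds ((Real.eulerMascheroniConstant + Real.log (2 * Real.sqrt 3)) / (Real.sqrt 3 * π))) := by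
  obtain ⟨C, hC, hosc⟩ := contDiff_triResRegularPart.exists_abs_integral_mul_cos_mul_le
    pi_div_two_pos.le
  have hbound : ∀ n : ℕ, 1 ≤ n →
      |triRes n - log n / (√3 * π) - (eulerMascheroniConstant + log (2 * √3)) / (√3 * π)|
        ≤ (1 / (√3 * π) + C / (2 * π)) / n := by
    intro n hn
    have hsum := abs_sum_range_inv_two_mul_add_one_sub_le (n := n) (by omega)
    have hint := hosc (2 * n) (by positivity)
    rw [triRes_sub_log_sub_eq]
    calc _ ≤ 2 / (√3 * π) * (1 / (2 * n)) + C / (2 * n) / π := by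
          refine (abs_sub _ _).trans (add_le_add ?_ ?_)
          · rw [abs_mul, abs_of_pos (by positivity)]
            gcongr
          · rw [abs_div, abs_of_pos pi_pos]
            gcongr
      _ = _ := by field_simp
  refine ⟨⟨_, by positivity, hbound⟩, ?_⟩
  rw [← tendsto_sub_nhds_zero_iff]
  exact squeeze_zero_norm' (eventually_atTop.2 ⟨1, hbound⟩)
    (tendsto_const_div_atTop_nhds_zero_nat _)
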